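/- arXiv:2403.04694 — 2 statements merged into one kernel-verified Lean document; each statement's English description precedes it below -/
import Mathlib

section
/- For every finite claw-free graph G, the domination number equals the [1,2]-domination number: γ(G) = γ_{[1,2]}(G). -/
/-- `(l, r)` is an interval representation of `G` by closed real intervals:
each vertex `v` gets the nonempty closed interval `[l v, r v]`, and distinct
vertices are adjacent iff their intervals intersect. -/
def IsIntervalRep {V : Type*} (G : SimpleGraph V) (l r : V → ℝ) : Prop :=
  (∀ v : V, l v ≤ r v) ∧
  ∀ u v : V, u ≠ v → (G.Adj u v ↔ (Set.Icc (l u) (r u) ∩ Set.Icc (l v) (r v)).Nonempty)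

/-- The representation is proper: no interval is properly contained in another. -/
def IsProperRep {V : Type*} (l r : V → ℝ) : Prop :=
  ∀ u v : V, ¬ Set.Icc (l u) (r u) ⊂ Set.Icc (l v) (r v)

/-- `D` is a dominating set of `G`. -/
def IsDomSet {V : Type*} [Fintype V] [DecidableEq V] (G : SimpleGraph V)
    [DecidableRel G.Adj] (D : Finset V) : Prop :=
  ∀ v : V, v ∉ D → ∃ u ∈ D, G.Adj v u

/-- `D` is a `[1,2]`-dominating set of `G`: every vertex outside `D` has at least
one and at most two neighbors in `D`. -/
def IsDom12Set {V : Type*} [Fintype V] [DecidableEq V] (G : SimpleGraph V)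
    [DecidableRel G.Adj] (D : Finset V) : Prop :=
  ∀ v : V, v ∉ D →
    1 ≤ (D.filter (fun u => G.Adj v u)).card ∧ (D.filter (fun u => G.Adj v u)).card ≤ 2

/-- The domination number `γ(G)`. -/
noncomputable def domNum {V : Type*} [Fintype V] [DecidableEq V] (G : SimpleGraph V)
    [DecidableRel G.Adj] : ℕ :=
  sInf {k : ℕ | ∃ D : Finset V, IsDomSet G D ∧ D.card = k}

/-- The `[1,2]`-domination number `γ_{[1,2]}(G)`. -/
noncomputable def dom12Num {V : Type*} [Fintype V] [DecidableEq V] (G : SimpleGraph V)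
    [DecidableRel G.Adj] : ℕ :=
  sInf {k : ℕ | ∃ D : Finset V, IsDom12Set G D ∧ D.card = k}

/-- `G` is claw-free: no vertex has three pairwise nonadjacent neighbors. -/
def ClawFree {V : Type*} (G : SimpleGraph V) : Prop :=
  ¬ ∃ (v a b c : V), G.Adj v a ∧ G.Adj v b ∧ G.Adj v c ∧
      a ≠ b ∧ a ≠ c ∧ b ≠ c ∧ ¬ G.Adj a b ∧ ¬ G.Adj a c ∧ ¬ G.Adj b c

/-!
Every dominating set of a claw-free graph that is independent is a `[1,2]`-dominating set: the
neighbours of an outside vertex `v` in it are pairwise nonadjacent, so there are at most two of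
them. It therefore suffices that a claw-free graph has a minimum dominating set that is
independent. Take a minimum dominating set `D` with the fewest adjacent pairs and suppose
`a, b ∈ D` are adjacent. By minimality some `w` is dominated by `a` alone, and `w ≠ a`. Swapping
`a` for `w` keeps `D` dominating: a vertex `v` dominated by `a` alone is adjacent to `w`, since
otherwise `a` would be the centre of the claw `v, w, b`. The swap destroys the edge `ab` and
creates none, contradicting the choice of `D`.
-/

open Finset

section

variable {V : Type*} {G : SimpleGraph V}

namespace ClawFree

theorem adj_of_not_adj_of_not_adj (hcf : ClawFree G) {c x y z : V}
    (hx : G.Adj c x) (hy : G.Adj c y) (hz : G.Adj c z) (hxy : x ≠ y) (hxz : x ≠ z) (hyz : y ≠ z)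
    (hnxz : ¬ G.Adj x z) (hnyz : ¬ G.Adj y z) : G.Adj x y := by
  by_contra hnxy
  exact hcf ⟨c, x, y, z, hx, hy, hz, hxy, hxz, hyz, hnxy, hnxz, hnyz⟩

theorem card_le_two_of_isIndepSet (hcf : ClawFree G) {v : V} {s : Finset V}
    (hs : ∀ u ∈ s, G.Adj v u) (hind : G.IsIndepSet (s : Set V)) : #s ≤ 2 := by
  by_contra! h
  obtain ⟨x, hx, y, hy, z, hz, hxy, hxz, hyz⟩ := two_lt_card.mp h
  exact hind hx hy hxy <| hcf.adj_of_not_adj_of_not_adj (hs x hx) (hs y hy) (hs z hz)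
    hxy hxz hyz (hind hx hz hxz) (hind hy hz hyz)

end ClawFree

variable [DecidableEq V] [DecidableRel G.Adj] {D : Finset V}

theorem interedges_insert_erase_ssubset {a b w : V} (ha : a ∈ D) (hb : b ∈ D) (hab : G.Adj a b)
    (hwa : w ≠ a) (hwD : ∀ u ∈ D.erase a, ¬ G.Adj w u) :
    G.interedges (insert w (D.erase a)) (insert w (D.erase a)) ⊂ G.interedges D D := by
  have hmem : ∀ x ∈ insert w (D.erase a), ∀ y ∈ insert w (D.erase a), G.Adj x y → x ∈ D := by
    intro x hx y hy hxy
    rcases mem_insert.mp hx with rfl | hx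
    · rcases mem_insert.mp hy with rfl | hy
      · exact absurd hxy (G.loopless.irrefl _)
      · exact absurd hxy (hwD y hy)
    · exact mem_of_mem_erase hx
  refine Finset.ssubset_iff_subset_ne.mpr ⟨fun p hp => ?_, fun h => ?_⟩
  · obtain ⟨hx, hy, hxy⟩ := G.mem_interedges_iff.mp hp
    exact G.mem_interedges_iff.mpr ⟨hmem _ hx _ hy hxy, hmem _ hy _ hx hxy.symm, hxy⟩
  · have hab' : (a, b) ∈ G.interedges D D := G.mk_mem_interedges_iff.mpr ⟨ha, hb, hab⟩
    rw [← h, SimpleGraph.mk_mem_interedges_iff, mem_insert, mem_erase] at hab'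
    rcases hab'.1 with h | h
    · exact hwa h.symm
    · exact h.1 rfl

variable [Fintype V]

theorem IsDom12Set.isDomSet (h : IsDom12Set G D) : IsDomSet G D := by
  intro v hv
  obtain ⟨u, hu⟩ := card_pos.mp (h v hv).1
  exact ⟨u, (mem_filter.mp hu).1, (mem_filter.mp hu).2⟩

theorem isDomSet_univ : IsDomSet G univ :=
  fun v hv => absurd (mem_univ v) hv

theorem isDom12Set_univ : IsDom12Set G univ :=
  fun v hv => absurd (mem_univ v) hv

theorem domNum_le_card (h : IsDomSet G D) : domNum G ≤ #D :=
  Nat.sInf_le ⟨D, h, rfl⟩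

theorem dom12Num_le_card (h : IsDom12Set G D) : dom12Num G ≤ #D :=
  Nat.sInf_le ⟨D, h, rfl⟩

theorem exists_isDomSet_card_eq_domNum : ∃ D : Finset V, IsDomSet G D ∧ #D = domNum G :=
  Nat.sInf_mem
    (⟨_, univ, isDomSet_univ, rfl⟩ : {k | ∃ D : Finset V, IsDomSet G D ∧ #D = k}.Nonempty)

theorem exists_isDom12Set_card_eq_dom12Num :
    ∃ D : Finset V, IsDom12Set G D ∧ #D = dom12Num G :=
  Nat.sInf_mem
    (⟨_, univ, isDom12Set_univ, rfl⟩ : {k | ∃ D : Finset V, IsDom12Set G D ∧ #D = k}.Nonempty)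

theorem domNum_le_dom12Num : domNum G ≤ dom12Num G := by
  obtain ⟨D, hD, hcard⟩ := exists_isDom12Set_card_eq_dom12Num (G := G)
  exact hcard ▸ domNum_le_card hD.isDomSet

theorem IsDomSet.isDom12Set_of_isIndepSet (hcf : ClawFree G) (hD : IsDomSet G D)
    (hind : G.IsIndepSet (D : Set V)) : IsDom12Set G D := by
  intro v hv
  obtain ⟨u, hu, hvu⟩ := hD v hv
  refine ⟨card_pos.mpr ⟨u, mem_filter.mpr ⟨hu, hvu⟩⟩, ?_⟩
  exact hcf.card_le_two_of_isIndepSet (fun x hx => (mem_filter.mp hx).2)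
    (hind.mono (coe_subset.mpr (filter_subset _ _)))

theorem IsDomSet.adj_of_forall_not_adj_erase (hD : IsDomSet G D) {v a : V} (hv : v ∉ D)
    (hva : ∀ u ∈ D.erase a, ¬ G.Adj v u) : G.Adj v a := by
  obtain ⟨u, hu, hvu⟩ := hD v hv
  by_contra hna
  exact hva u (mem_erase.mpr ⟨fun h => hna (h ▸ hvu), hu⟩) hvu

theorem IsDomSet.exists_adj_of_not_isDomSet_erase (hD : IsDomSet G D) {a b : V} (hb : b ∈ D)
    (hab : G.Adj a b) (hne : ¬ IsDomSet G (D.erase a)) :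
    ∃ w ∉ D, G.Adj w a ∧ ∀ u ∈ D.erase a, ¬ G.Adj w u := by
  simp only [IsDomSet, not_forall, not_exists, not_and] at hne
  obtain ⟨w, hw, hwa⟩ := hne
  have hbD : b ∈ D.erase a := mem_erase.mpr ⟨hab.ne.symm, hb⟩
  have hwD : w ∉ D := fun h => hw (mem_erase.mpr ⟨by rintro rfl; exact hwa b hbD hab, h⟩)
  exact ⟨w, hwD, hD.adj_of_forall_not_adj_erase hwD hwa, hwa⟩

theorem IsDomSet.insert_erase_of_clawFree (hcf : ClawFree G) (hD : IsDomSet G D) {a b w : V}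
    (hb : b ∈ D) (hab : G.Adj a b) (hw : w ∉ D) (hwa : G.Adj w a)
    (hwD : ∀ u ∈ D.erase a, ¬ G.Adj w u) : IsDomSet G (insert w (D.erase a)) := by
  intro v hv
  by_cases hdom : ∃ u ∈ D.erase a, G.Adj v u
  · obtain ⟨u, hu, hvu⟩ := hdom
    exact ⟨u, mem_insert_of_mem hu, hvu⟩
  push Not at hdom
  have hbD : b ∈ D.erase a := mem_erase.mpr ⟨hab.ne.symm, hb⟩
  have hvD : v ∉ D := fun h =>
    hv (mem_insert_of_mem (mem_erase.mpr ⟨by rintro rfl; exact hdom b hbD hab, h⟩))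
  have hvw : v ≠ w := by rintro rfl; exact hv (mem_insert_self _ _)
  refine ⟨w, mem_insert_self w _, ?_⟩
  exact hcf.adj_of_not_adj_of_not_adj (hD.adj_of_forall_not_adj_erase hvD hdom).symm hwa.symm hab
    hvw (fun h => hvD (h ▸ hb)) (fun h => hw (h ▸ hb)) (hdom b hbD) (hwD b hbD)

/-- Allan and Laskar, 1978. -/
theorem ClawFree.exists_isIndepSet_isDomSet_card_eq_domNum (hcf : ClawFree G) :
    ∃ D : Finset V, IsDomSet G D ∧ #D = domNum G ∧ G.IsIndepSet (D : Set V) := by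
  classical
  obtain ⟨D, hDmem, hmin⟩ := exists_min_image
    ({D | IsDomSet G D ∧ #D = domNum G} : Finset (Finset V)) (fun D => #(G.interedges D D))
    (let ⟨D, hD⟩ := exists_isDomSet_card_eq_domNum (G := G); ⟨D, mem_filter.mpr ⟨mem_univ _, hD⟩⟩)
  obtain ⟨hdom, hcard⟩ := (mem_filter.mp hDmem).2
  refine ⟨D, hdom, hcard, fun a ha b hb _ hab => ?_⟩
  have hne : ¬ IsDomSet G (D.erase a) := fun h =>
    (domNum_le_card h).not_gt (hcard ▸ card_erase_lt_of_mem ha)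
  obtain ⟨w, hw, hwa, hwD⟩ := hdom.exists_adj_of_not_isDomSet_erase hb hab hne
  have hw' : w ∉ D.erase a := fun h => hw (mem_of_mem_erase h)
  have hswap := hmin (insert w (D.erase a)) <| mem_filter.mpr ⟨mem_univ _,
    hdom.insert_erase_of_clawFree hcf hb hab hw hwa hwD, by
      rw [card_insert_of_notMem hw', card_erase_add_one ha, hcard]⟩
  exact (card_lt_card (interedges_insert_erase_ssubset ha hb hab hwa.ne hwD)).not_ge hswap

end

/-- For every finite claw-free graph `G`, the domination number equals the
`[1,2]`-domination number. -/
theorem domNum_eq_dom12Num_of_clawFree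
    {V : Type*} [Fintype V] [DecidableEq V] (G : SimpleGraph V) [DecidableRel G.Adj]
    (hcf : ClawFree G) :
    domNum G = dom12Num G := by
  obtain ⟨D, hdom, hcard, hind⟩ := hcf.exists_isIndepSet_isDomSet_card_eq_domNum
  have hdom12 : IsDom12Set G D := hdom.isDom12Set_of_isIndepSet hcf hind
  exact domNum_le_dom12Num.antisymm (hcard ▸ dom12Num_le_card hdom12)
end

section
/- Let 1 ≤ i' ≤ i ≤ n. If maxlow(i) < i', then γ^0_{[1,2]}(i',i) = min{ γ^1_{[1,2]}(low(j+1,i), j : j), γ^1_{[1,2]}(low(j+1,i), j : j,k) : j ∈ [maxlow(i), i'), k ∈ [low(j+1,i), j) }; if maxlow(i) ≥ i', then γ^0_{[1,2]}(i',i) = ∞ (i.e., is not defined). -/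
/-- `G` is a graph with vertex set `{1,…,n}` (all edges lie inside `{1,…,n}`),
whose adjacency satisfies the interval-graph numbering property: whenever
`i < j < k` and `i` is adjacent to `k`, then `j` is adjacent to `k`. -/
def GoodNumbering (G : SimpleGraph ℕ) (n : ℕ) : Prop :=
  (∀ u v : ℕ, G.Adj u v → u ∈ Finset.Icc 1 n ∧ v ∈ Finset.Icc 1 n) ∧
  (∀ i j k : ℕ, i < j → j < k → G.Adj i k → G.Adj j k)

/-- `low a = min N[a]`, the minimum of the closed neighborhood of `a`. -/
noncomputable def low (G : SimpleGraph ℕ) (a : ℕ) : ℕ :=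
  sInf {b : ℕ | b = a ∨ G.Adj a b}

/-- `lowI a b = min {low k : k ∈ [a,b]}`. -/
noncomputable def lowI (G : SimpleGraph ℕ) (a b : ℕ) : ℕ :=
  sInf (low G '' Set.Icc a b)

/-- `maxlow a = max {low k : low a ≤ k ≤ a}`. -/
noncomputable def maxlow (G : SimpleGraph ℕ) (a : ℕ) : ℕ :=
  sSup (low G '' Set.Icc (low G a) a)

/-- `D` is a `[1,2]`-dominating set of the induced subgraph `G[1,i]`:
`D ⊆ [1,i]` and every vertex of `[1,i]` outside `D` has at least one and at
most two neighbors in `D`. -/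
def Dom12 (G : SimpleGraph ℕ) (i : ℕ) (D : Finset ℕ) : Prop :=
  D ⊆ Finset.Icc 1 i ∧
  ∀ v ∈ Finset.Icc 1 i, v ∉ D →
    1 ≤ {u ∈ (D : Set ℕ) | G.Adj v u}.ncard ∧ {u ∈ (D : Set ℕ) | G.Adj v u}.ncard ≤ 2

/-- The minimum (in `ℕ∞`, with `sInf ∅ = ⊤`) of the cardinalities of the
`[1,2]`-dominating sets `D` of `G[1,i]` satisfying the extra property `P`. -/
noncomputable def gval (G : SimpleGraph ℕ) (i : ℕ) (P : Finset ℕ → Prop) : ℕ∞ :=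
  sInf {k : ℕ∞ | ∃ D : Finset ℕ, Dom12 G i D ∧ P D ∧ (D.card : ℕ∞) = k}

/-- `γ_{[1,2]}(i)`. -/
noncomputable def g12 (G : SimpleGraph ℕ) (i : ℕ) : ℕ∞ :=
  gval G i fun _ => True

/-- `γ⁰_{[1,2]}(j,i)`: no vertex of `[j,i]` is in `D`. -/
noncomputable def g0I (G : SimpleGraph ℕ) (j i : ℕ) : ℕ∞ :=
  gval G i fun D => ∀ x ∈ Finset.Icc j i, x ∉ D

/-- `γ⁰_{[1,2]}(j,i:k)`: `k ∈ D` and no other vertex of `[j,i]` is in `D`. -/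
noncomputable def g0Ik (G : SimpleGraph ℕ) (j i k : ℕ) : ℕ∞ :=
  gval G i fun D => k ∈ D ∧ ∀ x ∈ Finset.Icc j i, x ≠ k → x ∉ D

/-- `γ¹_{[1,2]}(i)`: `i ∈ D`. -/
noncomputable def g1 (G : SimpleGraph ℕ) (i : ℕ) : ℕ∞ :=
  gval G i fun D => i ∈ D

/-- `γ¹_{[1,2]}(j,i:i)`: `i ∈ D` and no vertex of `[j,i)` is in `D`. -/
noncomputable def g1I (G : SimpleGraph ℕ) (j i : ℕ) : ℕ∞ :=
  gval G i fun D => i ∈ D ∧ ∀ x ∈ Finset.Ico j i, x ∉ D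

/-- `γ¹_{[1,2]}(k,i:i,j)`: `i, j ∈ D` and no other vertex of `[k,i)` is in `D`. -/
noncomputable def g1Ij (G : SimpleGraph ℕ) (k i j : ℕ) : ℕ∞ :=
  gval G i fun D => i ∈ D ∧ j ∈ D ∧ ∀ x ∈ Finset.Ico k i, x ≠ j → x ∉ D

/-- `γ¹_{[1,2]}(l,i:i,j,k)`: `i, j, k ∈ D` and no other vertex of `[l,i)` is in `D`. -/
noncomputable def g1Ijk (G : SimpleGraph ℕ) (l i j k : ℕ) : ℕ∞ :=
  gval G i fun D => i ∈ D ∧ j ∈ D ∧ k ∈ D ∧ ∀ x ∈ Finset.Ico l i, x ≠ j → x ≠ k → x ∉ D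

/-- `γ¹¹_{[1,2]}(l,i:i,j,k)`: `i, j ∈ D`, all of `[l,k] ⊆ D`, and no vertex of
`(k,i)` other than `j` is in `D`. -/
noncomputable def g11Ijk (G : SimpleGraph ℕ) (l i j k : ℕ) : ℕ∞ :=
  gval G i fun D => i ∈ D ∧ j ∈ D ∧ (∀ x ∈ Finset.Icc l k, x ∈ D) ∧
    ∀ x ∈ Finset.Ioo k i, x ≠ j → x ∉ D


/-!
A `[1,2]`-dominating set `D` of `G[1,i]` avoiding `[i',i]` has its largest element `j` in
`[maxlow i, i')`, since every vertex `v` is dominated from `[low v, v]`. Once `maxlow i ≤ j`,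
each vertex of `(j,i]` is adjacent to `j`, its `D`-neighbours lie in `[lowI (j+1) i, j]`, and a
vertex realising `lowI (j+1) i` is adjacent to all of `D ∩ [lowI (j+1) i, j]`. So a set
`D ⊆ [1,j]` containing `j` is `[1,2]`-dominating for `G[1,i]` iff it is so for `G[1,j]` and has
at most one vertex `k` in `[lowI (j+1) i, j)`.
-/

open Finset

variable {G : SimpleGraph ℕ} {n : ℕ}

section low

lemma low_le_self (G : SimpleGraph ℕ) (a : ℕ) : low G a ≤ a :=
  Nat.sInf_le (Or.inl rfl)

lemma low_le_of_adj {a b : ℕ} (h : G.Adj a b) : low G a ≤ b :=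
  Nat.sInf_le (Or.inr h)

lemma low_eq_or_adj (G : SimpleGraph ℕ) (a : ℕ) : low G a = a ∨ G.Adj a (low G a) :=
  Nat.sInf_mem (s := {b | b = a ∨ G.Adj a b}) ⟨a, Or.inl rfl⟩

lemma GoodNumbering.one_le_low (hG : GoodNumbering G n) {a : ℕ} (ha : 1 ≤ a) :
    1 ≤ low G a := by
  rcases low_eq_or_adj G a with h | h
  · omega
  · exact (mem_Icc.1 (hG.1 a _ h).2).1

lemma GoodNumbering.adj_of_low_le (hG : GoodNumbering G n) {u v : ℕ}
    (hu : low G v ≤ u) (huv : u < v) : G.Adj v u := by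
  have hadj : G.Adj v (low G v) := (low_eq_or_adj G v).resolve_left (by omega)
  rcases hu.eq_or_lt with h | h
  · exact h ▸ hadj
  · exact (hG.2 _ u v h huv hadj.symm).symm

lemma bddAbove_low_image (G : SimpleGraph ℕ) (a b : ℕ) : BddAbove (low G '' Set.Icc a b) :=
  ((Set.finite_Icc a b).image _).bddAbove

lemma low_le_maxlow {i k : ℕ} (hk : k ∈ Set.Icc (low G i) i) : low G k ≤ maxlow G i :=
  le_csSup (bddAbove_low_image G _ _) ⟨k, hk, rfl⟩

lemma exists_low_eq_maxlow (G : SimpleGraph ℕ) (i : ℕ) :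
    ∃ k ∈ Set.Icc (low G i) i, low G k = maxlow G i :=
  Nat.sSup_mem (s := low G '' Set.Icc (low G i) i) ⟨_, i, ⟨low_le_self G i, le_rfl⟩, rfl⟩
    (bddAbove_low_image G _ _)

lemma lowI_le_low {a b m : ℕ} (hm : m ∈ Set.Icc a b) : lowI G a b ≤ low G m :=
  Nat.sInf_le ⟨m, hm, rfl⟩

lemma exists_low_eq_lowI (G : SimpleGraph ℕ) {a b : ℕ} (hab : a ≤ b) :
    ∃ m ∈ Set.Icc a b, low G m = lowI G a b :=
  Nat.sInf_mem (s := low G '' Set.Icc a b) ⟨_, a, ⟨le_rfl, hab⟩, rfl⟩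

lemma low_le_of_maxlow_le {i j v : ℕ} (hmj : maxlow G i ≤ j) (hv : v ∈ Set.Ioc j i) :
    low G v ≤ j := by
  have hi : low G i ≤ maxlow G i := low_le_maxlow ⟨low_le_self G i, le_rfl⟩
  exact (low_le_maxlow ⟨by grind, hv.2⟩).trans hmj

end low

section gval

variable {i j : ℕ} {P Q : Finset ℕ → Prop}

lemma gval_le_card {D : Finset ℕ} (hD : Dom12 G i D) (hP : P D) : gval G i P ≤ D.card :=
  sInf_le ⟨D, hD, hP, rfl⟩

lemma le_gval {c : ℕ∞} (h : ∀ D, Dom12 G i D → P D → c ≤ D.card) : c ≤ gval G i P :=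
  le_sInf fun _ ⟨D, hD, hP, hc⟩ => hc ▸ h D hD hP

lemma gval_le_gval (h : ∀ D, Dom12 G j D → Q D → Dom12 G i D ∧ P D) :
    gval G i P ≤ gval G j Q :=
  le_gval fun D hD hQ => gval_le_card (h D hD hQ).1 (h D hD hQ).2

lemma gval_eq_top (h : ∀ D, Dom12 G i D → ¬ P D) : gval G i P = ⊤ := by
  rw [gval, sInf_eq_top]
  rintro _ ⟨D, hD, hP, -⟩
  exact absurd hP (h D hD)

end gval

namespace Dom12

variable {i : ℕ} {D : Finset ℕ}

lemma exists_adj (hD : Dom12 G i D) {v : ℕ} (hv : v ∈ Icc 1 i) (hvD : v ∉ D) :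
    ∃ u ∈ D, G.Adj v u := by
  obtain ⟨u, huD, hu⟩ := (Set.ncard_pos (D.finite_toSet.subset fun _ h => h.1)).1
    (hD.2 v hv hvD).1
  exact ⟨u, huD, hu⟩

lemma exists_mem_low_le (hD : Dom12 G i D) {v : ℕ} (hv : v ∈ Icc 1 i) :
    ∃ u ∈ D, low G v ≤ u := by
  by_cases hvD : v ∈ D
  · exact ⟨v, hvD, low_le_self G v⟩
  · obtain ⟨u, huD, hu⟩ := hD.exists_adj hv hvD
    exact ⟨u, huD, low_le_of_adj hu⟩

lemma exists_mem_maxlow_le (hG : GoodNumbering G n) (hD : Dom12 G i D) (hi : 1 ≤ i) :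
    ∃ u ∈ D, maxlow G i ≤ u := by
  obtain ⟨k, hk, hlow⟩ := exists_low_eq_maxlow G i
  have hk1 : 1 ≤ k := (hG.one_le_low hi).trans hk.1
  obtain ⟨u, huD, hu⟩ := hD.exists_mem_low_le (mem_Icc.2 ⟨hk1, hk.2⟩)
  exact ⟨u, huD, hlow ▸ hu⟩

lemma card_inter_Ico_low_le_two (hG : GoodNumbering G n) (hD : Dom12 G i D) {v : ℕ}
    (hv : v ∈ Icc 1 i) (hvD : v ∉ D) : (D ∩ Ico (low G v) v).card ≤ 2 := by
  rw [← Set.ncard_coe_finset]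
  refine le_trans (Set.ncard_le_ncard ?_ (D.finite_toSet.subset fun _ h => h.1))
    (hD.2 v hv hvD).2
  intro u hu
  obtain ⟨huD, hu⟩ := mem_inter.1 hu
  exact ⟨huD, hG.adj_of_low_le (mem_Ico.1 hu).1 (mem_Ico.1 hu).2⟩

lemma restrict (hD : Dom12 G i D) {j : ℕ} (hji : j ≤ i) (hDj : ∀ x ∈ D, x ≤ j) :
    Dom12 G j D := by
  refine ⟨fun x hx => mem_Icc.2 ⟨(mem_Icc.1 (hD.1 hx)).1, hDj x hx⟩, fun v hv hvD => ?_⟩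
  exact hD.2 v (mem_Icc.2 ⟨(mem_Icc.1 hv).1, (mem_Icc.1 hv).2.trans hji⟩) hvD

lemma card_inter_Ico_lowI_le_one (hG : GoodNumbering G n) (hD : Dom12 G i D) {j : ℕ}
    (hjD : j ∈ D) (hDj : ∀ x ∈ D, x ≤ j) (hji : j < i) :
    (D ∩ Ico (lowI G (j + 1) i) j).card ≤ 1 := by
  obtain ⟨m, ⟨hjm, hmi⟩, hlow⟩ := exists_low_eq_lowI G (show j + 1 ≤ i by omega)
  have hmI : m ∈ Icc 1 i := mem_Icc.2 ⟨by omega, hmi⟩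
  have hmD : m ∉ D := fun h => absurd (hDj m h) (by omega)
  have hjT : j ∉ D ∩ Ico (lowI G (j + 1) i) j := by simp
  have hsub : insert j (D ∩ Ico (lowI G (j + 1) i) j) ⊆ D ∩ Ico (low G m) m := by
    obtain ⟨u, huD, hu⟩ := hD.exists_mem_low_le hmI
    have := hDj u huD
    intro x hx
    simp only [mem_insert, mem_inter, mem_Ico] at hx ⊢
    rcases hx with rfl | ⟨hxD, hx⟩
    · exact ⟨hjD, by omega, by omega⟩
    · exact ⟨hxD, by omega⟩
  have := (card_le_card hsub).trans (hD.card_inter_Ico_low_le_two hG hmI hmD)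
  rw [card_insert_of_notMem hjT] at this
  omega

lemma exists_max_mem_Ico_maxlow (hG : GoodNumbering G n) (hD : Dom12 G i D) {i' : ℕ}
    (hi' : 1 ≤ i') (hi'i : i' ≤ i) (hout : ∀ x ∈ Icc i' i, x ∉ D) :
    ∃ j ∈ Ico (maxlow G i) i', Dom12 G j D ∧ j ∈ D ∧
      (D ∩ Ico (lowI G (j + 1) i) j).card ≤ 1 := by
  obtain ⟨u, huD, hu⟩ := hD.exists_mem_maxlow_le hG (by omega)
  have hne : D.Nonempty := ⟨u, huD⟩
  have hjD := D.max'_mem hne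
  have hDj : ∀ x ∈ D, x ≤ D.max' hne := fun x hx => D.le_max' x hx
  have hji' : D.max' hne < i' := by
    by_contra h
    exact hout _ (mem_Icc.2 ⟨by omega, (mem_Icc.1 (hD.1 hjD)).2⟩) hjD
  refine ⟨D.max' hne, mem_Ico.2 ⟨hu.trans (hDj u huD), hji'⟩, hD.restrict (by omega) hDj,
    hjD, hD.card_inter_Ico_lowI_le_one hG hjD hDj (by omega)⟩

lemma of_maxlow_le (hG : GoodNumbering G n) {i j k : ℕ} (hD : Dom12 G j D) (hjD : j ∈ D)
    (hmj : maxlow G i ≤ j) (hji : j < i)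
    (hfree : ∀ x ∈ Ico (lowI G (j + 1) i) j, x ≠ k → x ∉ D) : Dom12 G i D := by
  refine ⟨fun x hx => ?_, fun v hv hvD => ?_⟩
  · exact mem_Icc.2 ⟨(mem_Icc.1 (hD.1 hx)).1, (mem_Icc.1 (hD.1 hx)).2.trans hji.le⟩
  obtain ⟨hv1, hvi⟩ := mem_Icc.1 hv
  by_cases hvj : v ≤ j
  · exact hD.2 v (mem_Icc.2 ⟨hv1, hvj⟩) hvD
  have hlow : low G v ≤ j := low_le_of_maxlow_le hmj ⟨by omega, hvi⟩
  have hnbrs : {u ∈ (D : Set ℕ) | G.Adj v u} ⊆ {j, k} := by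
    rintro u ⟨huD, hadj⟩
    have huj : u ≤ j := (mem_Icc.1 (hD.1 huD)).2
    have hlu : lowI G (j + 1) i ≤ u :=
      (lowI_le_low ⟨by omega, hvi⟩).trans (low_le_of_adj hadj)
    by_contra h
    simp only [Set.mem_insert_iff, Set.mem_singleton_iff, not_or] at h
    exact hfree u (mem_Ico.2 ⟨hlu, by omega⟩) h.2 huD
  refine ⟨(Set.ncard_pos (D.finite_toSet.subset fun _ h => h.1)).2
    ⟨j, hjD, hG.adj_of_low_le hlow (by omega)⟩, ?_⟩
  exact (Set.ncard_le_ncard hnbrs).trans ((Set.ncard_insert_le _ _).trans (by simp))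

end Dom12

theorem g0I_recurrence_general (G : SimpleGraph ℕ) (n : ℕ)
    (hG : GoodNumbering G n) (i i' : ℕ) (h1 : 1 ≤ i') (h2 : i' ≤ i) :
    (maxlow G i < i' →
      g0I G i' i =
        sInf {v : ℕ∞ | ∃ j ∈ Finset.Ico (maxlow G i) i',
          v = g1I G (lowI G (j + 1) i) j ∨
          ∃ k ∈ Finset.Ico (lowI G (j + 1) i) j, v = g1Ij G (lowI G (j + 1) i) j k}) ∧
    (i' ≤ maxlow G i → g0I G i' i = ⊤) := by
  have hextend : ∀ j ∈ Ico (maxlow G i) i', ∀ k D, Dom12 G j D → j ∈ D →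
      (∀ x ∈ Ico (lowI G (j + 1) i) j, x ≠ k → x ∉ D) →
      Dom12 G i D ∧ ∀ x ∈ Icc i' i, x ∉ D := fun j hj k D hD hjD hfree =>
    ⟨hD.of_maxlow_le hG hjD (mem_Ico.1 hj).1 (by grind) hfree, fun x hx hxD => by
      grind [mem_Icc.1 (hD.1 hxD)]⟩
  refine ⟨fun _ => le_antisymm ?_ ?_, fun hml => gval_eq_top fun D hD hout => ?_⟩
  · refine le_sInf ?_
    rintro _ ⟨j, hj, rfl | ⟨k, -, rfl⟩⟩
    · exact gval_le_gval fun D hD ⟨hjD, hfree⟩ =>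
        hextend j hj j D hD hjD fun x hx _ => hfree x hx
    · exact gval_le_gval fun D hD ⟨hjD, _, hfree⟩ => hextend j hj k D hD hjD hfree
  · refine le_gval fun D hD hout => ?_
    obtain ⟨j, hj, hDj, hjD, hcard⟩ := hD.exists_max_mem_Ico_maxlow hG h1 h2 hout
    by_cases hk : ∃ k ∈ Ico (lowI G (j + 1) i) j, k ∈ D
    · obtain ⟨k, hk, hkD⟩ := hk
      refine sInf_le_of_le ⟨j, hj, Or.inr ⟨k, hk, rfl⟩⟩ (gval_le_card hDj ⟨hjD, hkD, ?_⟩)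
      exact fun x hx hxk hxD => hxk (card_le_one.1 hcard x (mem_inter.2 ⟨hxD, hx⟩) k
        (mem_inter.2 ⟨hkD, hk⟩))
    · push Not at hk
      exact sInf_le_of_le ⟨j, hj, Or.inl rfl⟩ (gval_le_card hDj ⟨hjD, hk⟩)
  · obtain ⟨u, huD, hu⟩ := hD.exists_mem_maxlow_le hG (by omega)
    exact hout u (mem_Icc.2 ⟨by omega, (mem_Icc.1 (hD.1 huD)).2⟩) huD

/-- Lemma 3 (ii): recurrence for `γ⁰_{[1,2]}(i',i)`. -/
theorem g0I_recurrence (G : SimpleGraph ℕ) (n : ℕ) (hn : 1 ≤ n)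
    (hG : GoodNumbering G n) (i i' : ℕ) (h1 : 1 ≤ i') (h2 : i' ≤ i) (h3 : i ≤ n) :
    (maxlow G i < i' →
      g0I G i' i =
        sInf {v : ℕ∞ | ∃ j ∈ Finset.Ico (maxlow G i) i',
          v = g1I G (lowI G (j + 1) i) j ∨
          ∃ k ∈ Finset.Ico (lowI G (j + 1) i) j, v = g1Ij G (lowI G (j + 1) i) j k}) ∧
    (i' ≤ maxlow G i → g0I G i' i = ⊤) :=
  g0I_recurrence_general G n hG i i' h1 h2
end
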